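/- arXiv:1407.1121 — 2 statements merged into one kernel-verified Lean document; each statement's English description precedes it below -/
import Mathlib

section
/- Suppose the Frugal-1U median process starts at the true median, i.e. m̃_0 = M with F(M) = 1/2. Then for every t ≥ 1 and every ε ∈ (0,1), the probability that F(m̃_t) > 1/2 + 2·√(δ·ln(t/ε)) is at most ε. -/
/-!
Gambler's ruin. The estimate is a birth–death walk on `ℤ` that steps up from `x` with probability
`p x = μ (x, ∞) / 2` and down with probability `q x = μ (-∞, x) / 2`. Let `L` be the first point
with `F L > 1/2 + λ`, where `λ = 2 √(δ log (t/ε))`. The scale function `g` of the walk, anchored at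
`M` and frozen from `L` on, is harmonic strictly between `M` and `L`, has drift `p M = 1/4` at `M`
and nonpositive drift elsewhere, so `𝔼 g(m̃ₜ) ≤ t/4`.

Since atoms weigh at most `δ`, `F` grows by at most `δ` per step. Hence `λ < (L - M) δ`, and on the
last `K = ⌊λ / 2δ⌋` levels below `L` we have `F > 1/2 + λ/2`, where `q / p ≥ 1 / (1 - λ) ≥ e^λ`;
everywhere in `(M, L)` we have `q / p ≥ 1`. So `g L ≥ e^{λK} ≥ t / 2ε`, and Markov's inequality
gives `Pr[m̃ₜ ≥ L] ≤ ε/2`.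
-/

open MeasureTheory ProbabilityTheory Set Real

section RandomRecursion

variable {Ω α β : Type*} [MeasurableSpace α] [mβ : MeasurableSpace β]
  {Y : ℕ → Ω → β} {step : α → β → α} {X : ℕ → Ω → α} {a : α}

theorem measurable_iSup_comap_of_recursion
    (hstep : Measurable (Function.uncurry step)) (h0 : ∀ ω, X 0 ω = a)
    (hrec : ∀ j ω, X (j + 1) ω = step (X j ω) (Y (j + 1) ω)) (j : ℕ) :
    Measurable[⨆ i ∈ Iic j, mβ.comap (Y i)] (X j) := by
  induction j with
  | zero =>
    rw [funext h0]
    exact measurable_const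
  | succ j ih =>
    rw [funext (hrec j)]
    refine hstep.comp (Measurable.prodMk (ih.mono ?_ le_rfl) ?_)
    · exact biSup_mono fun i hi => le_trans hi (Nat.le_succ j)
    · exact (comap_measurable (Y (j + 1))).mono
        (le_biSup (fun i => mβ.comap (Y i)) (mem_Iic.2 le_rfl)) le_rfl

variable [MeasurableSpace Ω] {P : Measure Ω}

theorem measurable_of_recursion (hY : ∀ i, Measurable (Y i))
    (hstep : Measurable (Function.uncurry step)) (h0 : ∀ ω, X 0 ω = a)
    (hrec : ∀ j ω, X (j + 1) ω = step (X j ω) (Y (j + 1) ω)) (j : ℕ) : Measurable (X j) :=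
  (measurable_iSup_comap_of_recursion hstep h0 hrec j).mono
    (iSup₂_le fun i _ => (hY i).comap_le) le_rfl

theorem indepFun_of_recursion (hY : ∀ i, Measurable (Y i)) (hind : iIndepFun Y P)
    (hstep : Measurable (Function.uncurry step)) (h0 : ∀ ω, X 0 ω = a)
    (hrec : ∀ j ω, X (j + 1) ω = step (X j ω) (Y (j + 1) ω)) (j : ℕ) :
    IndepFun (X j) (Y (j + 1)) P := by
  have hdisj : Disjoint (Iic j) {j + 1} := by simp
  have h := indep_iSup_of_disjoint (fun i => (hY i).comap_le) hind.iIndep hdisj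
  rw [iSup_singleton] at h
  exact indep_of_indep_of_le_left h (measurable_iSup_comap_of_recursion hstep h0 hrec j).comap_le

theorem integral_comp_step_eq [IsFiniteMeasure P] {ν : Measure β} [SFinite ν] {Z : Ω → α}
    {W : Ω → β} (hZ : Measurable Z) (hW : Measurable W) (hind : IndepFun Z W P)
    (hlaw : P.map W = ν) {g : α → ℝ}
    (hg : Integrable (fun p : α × β => g (step p.1 p.2)) ((P.map Z).prod ν)) :
    ∫ ω, g (step (Z ω) (W ω)) ∂P = ∫ x, ∫ y, g (step x y) ∂ν ∂(P.map Z) := by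
  subst hlaw
  have hmap := (indepFun_iff_map_prod_eq_prod_map_map hZ.aemeasurable hW.aemeasurable).1 hind
  rw [← integral_prod _ hg, ← hmap, integral_map (hZ.prodMk hW).aemeasurable]
  exact hmap ▸ hg.aestronglyMeasurable

theorem integral_comp_recursion_le (hY : ∀ i, Measurable (Y i)) (hind : iIndepFun Y P)
    {ν : Measure β} [IsProbabilityMeasure ν] (hlaw : ∀ i, P.map (Y i) = ν)
    (hstep : Measurable (Function.uncurry step)) (h0 : ∀ ω, X 0 ω = a)
    (hrec : ∀ j ω, X (j + 1) ω = step (X j ω) (Y (j + 1) ω)) {g : α → ℝ} (hg : Measurable g)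
    {C : ℝ} (hC : ∀ x, |g x| ≤ C) {c : ℝ} (hdrift : ∀ x, ∫ y, g (step x y) ∂ν ≤ g x + c)
    (t : ℕ) : ∫ ω, g (X t ω) ∂P ≤ g a + t * c := by
  have := hind.isProbabilityMeasure
  have hg_int {m : Measure α} [IsFiniteMeasure m] : Integrable g m :=
    .of_bound hg.aestronglyMeasurable C (.of_forall hC)
  induction t with
  | zero => simp [h0]
  | succ j ih =>
    have hXj := measurable_of_recursion hY hstep h0 hrec j
    have := Measure.isProbabilityMeasure_map (μ := P) hXj.aemeasurable
    have hint : Integrable (fun p : α × β => g (step p.1 p.2)) ((P.map (X j)).prod ν) :=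
      .of_bound (hg.comp hstep).aestronglyMeasurable C (.of_forall fun p => hC _)
    calc ∫ ω, g (X (j + 1) ω) ∂P
        = ∫ x, ∫ y, g (step x y) ∂ν ∂(P.map (X j)) := by
          simp only [hrec]
          exact integral_comp_step_eq hXj (hY _) (indepFun_of_recursion hY hind hstep h0 hrec j)
            (hlaw _) hint
      _ ≤ ∫ x, (g x + c) ∂(P.map (X j)) :=
          integral_mono hint.integral_prod_left (hg_int.add (integrable_const c)) hdrift
      _ = ∫ ω, g (X j ω) ∂P + c := by
          rw [integral_add hg_int (integrable_const c),
            integral_map hXj.aemeasurable hg.aestronglyMeasurable]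
          simp
      _ ≤ g a + (j + 1 : ℕ) * c := by push_cast; linarith

theorem measure_ge_le_of_recursion (hY : ∀ i, Measurable (Y i)) (hind : iIndepFun Y P)
    {ν : Measure β} [IsProbabilityMeasure ν] (hlaw : ∀ i, P.map (Y i) = ν)
    (hstep : Measurable (Function.uncurry step)) (h0 : ∀ ω, X 0 ω = a)
    (hrec : ∀ j ω, X (j + 1) ω = step (X j ω) (Y (j + 1) ω)) {g : α → ℝ} (hg : Measurable g)
    (hg0 : ∀ x, 0 ≤ g x) {C : ℝ} (hC : ∀ x, g x ≤ C) {c : ℝ}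
    (hdrift : ∀ x, ∫ y, g (step x y) ∂ν ≤ g x + c) (t : ℕ) {b : ℝ} (hb : 0 < b) :
    P {ω | b ≤ g (X t ω)} ≤ ENNReal.ofReal ((g a + t * c) / b) := by
  have := hind.isProbabilityMeasure
  have hC' (x : α) : |g x| ≤ C := abs_le.2 ⟨by linarith [hg0 x, hC x], hC x⟩
  have hint : Integrable (fun ω => g (X t ω)) P :=
    .of_bound (hg.comp (measurable_of_recursion hY hstep h0 hrec t)).aestronglyMeasurable C
      (.of_forall fun ω => hC' _)
  have hmarkov := (mul_meas_ge_le_integral_of_nonneg (.of_forall fun ω => hg0 _) hint b).trans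
    (integral_comp_recursion_le hY hind hlaw hstep h0 hrec hg hC' hdrift t)
  rw [← ofReal_measureReal]
  exact ENNReal.ofReal_le_ofReal ((le_div_iff₀' hb).2 hmarkov)

end RandomRecursion

open Finset in
/-- Scale function of the birth–death walk on `ℤ` with up-probabilities `p` and
down-probabilities `q`, frozen outside `[M, M + n]`: its increments `∏ q / p` make it harmonic
for the walk strictly between `M` and `M + n`. -/
noncomputable def birthDeathScale (p q : ℤ → ℝ) (M : ℤ) (n : ℕ) (x : ℤ) : ℝ :=
  ∑ i ∈ range (min (x - M).toNat n), ∏ j ∈ range i, q (M + 1 + j) / p (M + 1 + j)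

namespace birthDeathScale

open Finset

variable {p q : ℤ → ℝ} {M : ℤ} {n : ℕ}

theorem succ_sub (x : ℤ) :
    birthDeathScale p q M n (x + 1) - birthDeathScale p q M n x =
      if M ≤ x ∧ x < M + n then ∏ j ∈ range (x - M).toNat, q (M + 1 + j) / p (M + 1 + j)
      else 0 := by
  unfold birthDeathScale
  split_ifs with hx
  · rw [show min (x + 1 - M).toNat n = min (x - M).toNat n + 1 by omega, sum_range_succ,
      show min (x - M).toNat n = (x - M).toNat by omega]
    ring
  · rw [show min (x + 1 - M).toNat n = min (x - M).toNat n by omega, sub_self]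

theorem eq_zero_of_le {x : ℤ} (hx : x ≤ M) : birthDeathScale p q M n x = 0 := by
  simp [birthDeathScale, show (x - M).toNat = 0 by omega]

theorem prod_ratio_nonneg (hp : ∀ x, 0 ≤ p x) (hq : ∀ x, 0 ≤ q x) (k : ℕ) :
    0 ≤ ∏ j ∈ range k, q (M + 1 + j) / p (M + 1 + j) :=
  prod_nonneg fun _ _ => div_nonneg (hq _) (hp _)

theorem nonneg (hp : ∀ x, 0 ≤ p x) (hq : ∀ x, 0 ≤ q x) (x : ℤ) :
    0 ≤ birthDeathScale p q M n x :=
  sum_nonneg fun _ _ => prod_ratio_nonneg hp hq _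

theorem le_top (hp : ∀ x, 0 ≤ p x) (hq : ∀ x, 0 ≤ q x) (x : ℤ) :
    birthDeathScale p q M n x ≤ birthDeathScale p q M n (M + n) := by
  unfold birthDeathScale
  rw [show (M + n - M).toNat = n by omega, min_self]
  exact sum_le_sum_of_subset_of_nonneg (range_subset_range.2 (min_le_right _ _))
    fun _ _ _ => prod_ratio_nonneg hp hq _

theorem monotone (hp : ∀ x, 0 ≤ p x) (hq : ∀ x, 0 ≤ q x) :
    Monotone (birthDeathScale p q M n) := by
  refine monotone_int_of_le_succ fun x => sub_nonneg.1 ?_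
  rw [succ_sub]
  split_ifs
  exacts [prod_ratio_nonneg hp hq _, le_rfl]

theorem drift_le (hp : ∀ x, 0 ≤ p x) (hq : ∀ x, 0 ≤ q x)
    (hpos : ∀ x, M < x → x < M + n → 0 < p x) (x : ℤ) :
    p x * (birthDeathScale p q M n (x + 1) - birthDeathScale p q M n x) +
      q x * (birthDeathScale p q M n (x - 1) - birthDeathScale p q M n x) ≤ p M := by
  have hdown : birthDeathScale p q M n (x - 1) - birthDeathScale p q M n x =
      -(birthDeathScale p q M n (x - 1 + 1) - birthDeathScale p q M n (x - 1)) := by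
    rw [sub_add_cancel]; ring
  rw [hdown, succ_sub, succ_sub]
  rcases lt_trichotomy x M with hx | rfl | hx
  · simpa [show ¬ M ≤ x by omega, show ¬ M ≤ x - 1 by omega] using hp M
  · split_ifs <;> simp_all
  · by_cases hxn : x < M + n
    · obtain ⟨k, hk⟩ : ∃ k : ℕ, x - M = k + 1 := ⟨(x - 1 - M).toNat, by omega⟩
      have hxk : M + 1 + (k : ℤ) = x := by omega
      rw [if_pos ⟨hx.le, hxn⟩, if_pos ⟨by omega, by omega⟩, hk, show x - 1 - M = k by omega,
        show ((k : ℤ) + 1).toNat = k + 1 by omega, Int.toNat_natCast, prod_range_succ, hxk,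
        mul_left_comm, mul_div_cancel₀ _ (hpos x hx hxn).ne']
      linarith [hp M]
    · rw [if_neg (by omega)]
      have := prod_ratio_nonneg hp hq (M := M) (x - 1 - M).toNat
      split_ifs <;> nlinarith [hp x, hq x, hp M]

theorem pow_le_top (hp : ∀ x, 0 ≤ p x) (hq : ∀ x, 0 ≤ q x) {a : ℝ} (ha : 0 ≤ a) {K : ℕ}
    (hK : K < n) (hone : ∀ x, M < x → x < M + n → 1 ≤ q x / p x)
    (htop : ∀ x, M + n - K ≤ x → x < M + n → a ≤ q x / p x) :
    a ^ K ≤ birthDeathScale p q M n (M + n) := by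
  calc a ^ K = ∏ _j ∈ Ico (n - 1 - K) (n - 1), a := by
        rw [prod_const, Nat.card_Ico, show n - 1 - (n - 1 - K) = K by omega]
    _ ≤ ∏ j ∈ Ico (n - 1 - K) (n - 1), q (M + 1 + j) / p (M + 1 + j) :=
        prod_le_prod (fun _ _ => ha) fun j hj => by
          rw [Finset.mem_Ico] at hj
          exact htop _ (by omega) (by omega)
    _ ≤ ∏ j ∈ range (n - 1), q (M + 1 + j) / p (M + 1 + j) :=
        prod_le_prod_of_subset_of_one_le (fun j hj => Finset.mem_range.2 (Finset.mem_Ico.1 hj).2)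
          (fun _ _ => div_nonneg (hq _) (hp _)) fun j hj _ => by
            rw [Finset.mem_range] at hj
            exact hone _ (by omega) (by omega)
    _ ≤ birthDeathScale p q M n (M + n) := by
        unfold birthDeathScale
        rw [show (M + n - M).toNat = n by omega, min_self]
        exact single_le_sum (f := fun i => ∏ j ∈ range i, q (M + 1 + j) / p (M + 1 + j))
          (fun i _ => prod_ratio_nonneg hp hq i) (Finset.mem_range.2 (by omega))

end birthDeathScale

noncomputable def frugalStep (x : ℤ) (y : ℤ × ℝ) : ℤ :=
  if x < y.1 ∧ (1 : ℝ) / 2 < y.2 then x + 1 else if y.1 < x ∧ (1 : ℝ) / 2 < y.2 then x - 1 else x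

theorem measurable_frugalStep : Measurable (Function.uncurry frugalStep) := by
  refine measurable_from_prod_countable_right fun x => ?_
  refine measurable_from_prod_countable_right fun s => ?_
  simp only [Function.uncurry, frugalStep]
  refine Measurable.ite ?_ measurable_const (.ite ?_ measurable_const measurable_const) <;>
  · exact (MeasurableSet.const _).inter measurableSet_Ioi

theorem comp_frugalStep_eq (g : ℤ → ℝ) (x : ℤ) (y : ℤ × ℝ) :
    g (frugalStep x y) = g x + (Ioi x ×ˢ Ioi (1 / 2 : ℝ)).indicator (fun _ => g (x + 1) - g x) y
      + (Iio x ×ˢ Ioi (1 / 2 : ℝ)).indicator (fun _ => g (x - 1) - g x) y := by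
  obtain ⟨s, u⟩ := y
  simp only [frugalStep, indicator, mem_prod, mem_Ioi, mem_Iio]
  split_ifs <;> first | (exfalso; omega) | ring

theorem measureReal_restrict_Icc_Ioi_half :
    (volume.restrict (Icc (0 : ℝ) 1)).real (Ioi (1 / 2)) = 1 / 2 := by
  have : Ioi (1 / 2 : ℝ) ∩ Icc 0 1 = Ioc (1 / 2) 1 := by
    ext y
    simp only [mem_inter_iff, mem_Ioi, mem_Icc, mem_Ioc]
    exact ⟨fun ⟨h1, _, h3⟩ => ⟨h1, h3⟩, fun ⟨h1, h3⟩ => ⟨h1, by linarith, h3⟩⟩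
  rw [measureReal_def, Measure.restrict_apply measurableSet_Ioi, this, Real.volume_Ioc]
  norm_num

instance : IsProbabilityMeasure (volume.restrict (Icc (0 : ℝ) 1)) := ⟨by simp⟩

theorem integral_frugalStep (μ : Measure ℤ) [IsProbabilityMeasure μ] (g : ℤ → ℝ) (x : ℤ) :
    ∫ y, g (frugalStep x y) ∂(μ.prod (volume.restrict (Icc (0 : ℝ) 1))) =
      g x + μ.real (Ioi x) / 2 * (g (x + 1) - g x) + μ.real (Iio x) / 2 * (g (x - 1) - g x) := by
  have hA : MeasurableSet (Ioi x ×ˢ Ioi (1 / 2 : ℝ)) := .prod .of_discrete measurableSet_Ioi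
  have hB : MeasurableSet (Iio x ×ˢ Ioi (1 / 2 : ℝ)) := .prod .of_discrete measurableSet_Ioi
  simp only [comp_frugalStep_eq g x]
  rw [integral_add ((integrable_const _).add ((integrable_const _).indicator hA))
      ((integrable_const _).indicator hB),
    integral_add (integrable_const _) ((integrable_const _).indicator hA),
    integral_indicator_const _ hA, integral_indicator_const _ hB, integral_const,
    measureReal_prod_prod, measureReal_prod_prod, measureReal_restrict_Icc_Ioi_half]
  simp only [probReal_univ, smul_eq_mul]
  ring

theorem measureReal_Ioi_eq_one_sub {α : Type*} [LinearOrder α] [TopologicalSpace α]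
    [OrderClosedTopology α] [MeasurableSpace α] [OpensMeasurableSpace α] (μ : Measure α)
    [IsProbabilityMeasure μ] (x : α) : μ.real (Ioi x) = 1 - μ.real (Iic x) := by
  rw [← compl_Iic, probReal_compl_eq_one_sub measurableSet_Iic]

theorem measureReal_Iic_le_add (μ : Measure ℤ) [IsFiniteMeasure μ] {δ : ℝ}
    (hmass : ∀ x, μ.real {x} ≤ δ) {x y : ℤ} (hxy : x ≤ y) :
    μ.real (Iic y) ≤ μ.real (Iic x) + (y - x) * δ := by
  induction y, hxy using Int.leInduction with
  | base => simp
  | succ y _ ih =>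
    have hsub : Iic (y + 1) ⊆ Iic y ∪ {y + 1} := fun z hz => by
      simp only [mem_union, mem_Iic, mem_singleton_iff] at hz ⊢
      omega
    calc μ.real (Iic (y + 1)) ≤ μ.real (Iic y) + μ.real {y + 1} :=
          (measureReal_mono hsub).trans (measureReal_union_le _ _)
      _ ≤ μ.real (Iic x) + ((y + 1 : ℤ) - x) * δ := by push_cast; linarith [hmass (y + 1)]

theorem Monotone.exists_first_gt {F : ℤ → ℝ} (hF : Monotone F) {M : ℤ} {c : ℝ} (hM : F M ≤ c)
    (h : ∃ z, c < F z) : ∃ n : ℕ, c < F (M + n) ∧ ∀ x < M + n, F x ≤ c := by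
  have hM_lt {z : ℤ} (hz : c < F z) : M < z := by
    by_contra! hzM
    linarith [hF hzM]
  obtain ⟨L, hL, hL_min⟩ := Int.exists_least_of_bdd ⟨M, fun z hz => (hM_lt hz).le⟩ h
  obtain ⟨n, rfl⟩ := Int.le.dest (hM_lt hL).le
  exact ⟨n, hL, fun x hx => not_lt.1 fun h => (hL_min x h).not_gt hx⟩

theorem half_le_exp_mul_floor {δ T : ℝ} (hδ : 0 < δ) (hT : 1 ≤ T)
    (hlam : 2 * √(δ * log T) ≤ 1 / 2) :
    T / 2 ≤ exp (2 * √(δ * log T) * ⌊2 * √(δ * log T) / (2 * δ)⌋₊) := by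
  set lam := 2 * √(δ * log T)
  have hlog : 0 ≤ log T := log_nonneg hT
  have hlam0 : 0 ≤ lam := by positivity
  have hsq : lam * (lam / (2 * δ)) = 2 * log T := by
    have : lam ^ 2 = 4 * (δ * log T) := by rw [mul_pow, sq_sqrt (by positivity)]; ring
    field_simp
    linarith
  have hexp : log T - 1 / 2 ≤ lam * ⌊lam / (2 * δ)⌋₊ := by
    nlinarith [mul_le_mul_of_nonneg_left (Nat.sub_one_lt_floor (lam / (2 * δ))).le hlam0]
  calc T / 2 ≤ T * exp (-(1 / 2)) := by nlinarith [add_one_le_exp (-(1 / 2 : ℝ))]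
    _ = exp (log T - 1 / 2) := by rw [sub_eq_add_neg, exp_add, exp_log (by linarith)]
    _ ≤ exp (lam * ⌊lam / (2 * δ)⌋₊) := exp_le_exp.2 hexp

noncomputable abbrev frugalScale (μ : Measure ℤ) (M : ℤ) (n : ℕ) : ℤ → ℝ :=
  birthDeathScale (fun x => μ.real (Ioi x)) (fun x => μ.real (Iio x)) M n

theorem integral_frugalScale_frugalStep_le (μ : Measure ℤ) [IsProbabilityMeasure μ] {M : ℤ}
    (hM : μ.real (Iic M) = 1 / 2) {n : ℕ} (hbelow : ∀ x < M + n, μ.real (Iic x) < 1) (x : ℤ) :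
    ∫ y, frugalScale μ M n (frugalStep x y) ∂(μ.prod (volume.restrict (Icc (0 : ℝ) 1))) ≤
      frugalScale μ M n x + 1 / 4 := by
  have hdrift := birthDeathScale.drift_le (p := fun x => μ.real (Ioi x))
    (q := fun x => μ.real (Iio x)) (fun _ => measureReal_nonneg) (fun _ => measureReal_nonneg)
    (fun y _ hy => by rw [measureReal_Ioi_eq_one_sub]; linarith [hbelow y hy]) x
  rw [measureReal_Ioi_eq_one_sub μ M, hM] at hdrift
  rw [integral_frugalStep]
  linarith

theorem exp_mul_floor_le_frugalScale (μ : Measure ℤ) [IsProbabilityMeasure μ] {δ : ℝ}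
    (hδ : 0 < δ) (hmass : ∀ x, μ.real {x} ≤ δ) {M : ℤ} (hM : μ.real (Iic M) = 1 / 2)
    {lam : ℝ} (hlam : 0 ≤ lam) {n : ℕ} (hcross : 1 / 2 + lam < μ.real (Iic (M + n)))
    (hbelow : ∀ x < M + n, μ.real (Iic x) ≤ 1 / 2 + lam) :
    exp (lam * ⌊lam / (2 * δ)⌋₊) ≤ frugalScale μ M n (M + n) := by
  set K := ⌊lam / (2 * δ)⌋₊
  have hlam1 : lam < 1 / 2 := by linarith [measureReal_le_one (μ := μ) (s := Iic (M + n))]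
  have hKδ : K * δ ≤ lam / 2 :=
    calc K * δ ≤ lam / (2 * δ) * δ := by gcongr; exact Nat.floor_le (by positivity)
      _ = lam / 2 := by field_simp
  have hKn : K < n := by
    have := measureReal_Iic_le_add μ hmass (show M ≤ M + n by omega)
    push_cast at this
    exact_mod_cast (show (K : ℝ) < n by nlinarith)
  have hIio (x : ℤ) (hx : M < x) : 1 / 2 ≤ μ.real (Iio x) :=
    hM ▸ measureReal_mono (Iic_subset_Iio.2 hx)
  have hpos (x : ℤ) (hx : x < M + n) : 0 < μ.real (Ioi x) := by
    rw [measureReal_Ioi_eq_one_sub]; linarith [hbelow x hx]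
  rw [mul_comm, exp_nat_mul]
  refine birthDeathScale.pow_le_top (fun _ => measureReal_nonneg) (fun _ => measureReal_nonneg)
    (exp_pos lam).le hKn (fun x hMx hxn => ?_) (fun x hx hxn => ?_)
  · have hmedian_le : 1 / 2 ≤ μ.real (Iic x) := hM ▸ measureReal_mono (Iic_subset_Iic.2 hMx.le)
    rw [le_div_iff₀ (hpos x hxn), one_mul, measureReal_Ioi_eq_one_sub]
    linarith [hIio x hMx]
  · have hFx : 1 / 2 + lam / 2 < μ.real (Iic x) := by
      have := measureReal_Iic_le_add μ hmass hxn.le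
      have : ((M + n : ℤ) - x : ℝ) * δ ≤ K * δ :=
        mul_le_mul_of_nonneg_right (by exact_mod_cast (by omega : M + n - x ≤ K)) hδ.le
      linarith
    have hexp : exp lam * (1 - lam) ≤ 1 :=
      calc exp lam * (1 - lam) ≤ exp lam * exp (-lam) := by
            gcongr; linarith [add_one_le_exp (-lam)]
        _ = 1 := by rw [← exp_add, add_neg_cancel, exp_zero]
    rw [le_div_iff₀ (hpos x hxn), measureReal_Ioi_eq_one_sub]
    nlinarith [hIio x (by omega), exp_pos lam]

theorem half_le_frugalScale (μ : Measure ℤ) [IsProbabilityMeasure μ] {δ : ℝ} (hδ : 0 < δ)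
    (hmass : ∀ x, μ.real {x} ≤ δ) {M : ℤ} (hM : μ.real (Iic M) = 1 / 2) {T : ℝ} (hT : 1 ≤ T)
    {n : ℕ} (hcross : 1 / 2 + 2 * √(δ * log T) < μ.real (Iic (M + n)))
    (hbelow : ∀ x < M + n, μ.real (Iic x) ≤ 1 / 2 + 2 * √(δ * log T)) :
    T / 2 ≤ frugalScale μ M n (M + n) :=
  (half_le_exp_mul_floor hδ hT
    (by linarith [measureReal_le_one (μ := μ) (s := Iic (M + n))])).trans
    (exp_mul_floor_le_frugalScale μ hδ hmass hM (by positivity) hcross hbelow)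

theorem frugal1U_median_stability_right_general
    {Ω : Type*} [MeasureSpace Ω]
    (μ : Measure ℤ) [IsProbabilityMeasure μ]
    (δ : ℝ) (hδ0 : 0 < δ)
    (hmass : ∀ x : ℤ, (μ {x}).toReal ≤ δ)
    (F : ℤ → ℝ) (hF : ∀ x : ℤ, F x = (μ {y : ℤ | y ≤ x}).toReal)
    (s : ℕ → Ω → ℤ) (u : ℕ → Ω → ℝ)
    (hs_meas : ∀ t, Measurable (s t)) (hu_meas : ∀ t, Measurable (u t))
    (hlaw : ∀ t : ℕ, Measure.map (fun ω => (s t ω, u t ω)) ℙ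
      = μ.prod (volume.restrict (Set.Icc (0:ℝ) 1)))
    (hindep : iIndepFun
      (fun t ω => (s t ω, u t ω)) ℙ)
    (m : ℕ → Ω → ℤ)
    (M : ℤ) (hmedian : F M = 1/2)
    (hm0 : ∀ ω, m 0 ω = M)
    (hrec : ∀ t ω, m (t+1) ω =
      if m t ω < s (t+1) ω ∧ (1:ℝ)/2 < u (t+1) ω then m t ω + 1
      else if s (t+1) ω < m t ω ∧ (1:ℝ)/2 < u (t+1) ω then m t ω - 1
      else m t ω)
    (t : ℕ) (ht : 1 ≤ t) (ε : ℝ) (hε0 : 0 < ε) (hε1 : ε < 1) :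
    ℙ {ω | 1/2 + 2 * Real.sqrt (δ * Real.log (t / ε)) < F (m t ω)}
      ≤ ENNReal.ofReal ε := by
  obtain rfl : F = fun x => μ.real (Iic x) := funext hF
  beta_reduce at hmedian ⊢
  set lam := 2 * √(δ * log (t / ε))
  by_cases hcross : ∃ z, 1 / 2 + lam < μ.real (Iic z)
  swap
  · push Not at hcross
    exact (measure_mono_null (t := ∅) (fun ω hω => (hcross (m t ω)).not_gt hω)
      measure_empty).trans_le zero_le
  obtain ⟨n, hL, hbelow⟩ := Monotone.exists_first_gt (fun _ _ h => measureReal_mono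
    (Iic_subset_Iic.2 h)) (by rw [hmedian]; linarith [show 0 ≤ lam by positivity]) hcross
  have hT : 1 ≤ (t : ℝ) / ε := (one_le_div hε0).2 (hε1.le.trans (by exact_mod_cast ht))
  have hgL := half_le_frugalScale μ hδ0 hmass hmedian hT hL hbelow
  have hgL_pos : 0 < frugalScale μ M n (M + n) := (half_pos (one_pos.trans_le hT)).trans_le hgL
  have hp (x : ℤ) : 0 ≤ μ.real (Ioi x) := measureReal_nonneg
  have hq (x : ℤ) : 0 ≤ μ.real (Iio x) := measureReal_nonneg
  calc ℙ {ω | 1 / 2 + lam < μ.real (Iic (m t ω))}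
      ≤ ℙ {ω | frugalScale μ M n (M + n) ≤ frugalScale μ M n (m t ω)} :=
        measure_mono fun ω hω => birthDeathScale.monotone hp hq
          (le_of_not_gt fun h => (hbelow _ h).not_gt hω)
    _ ≤ ENNReal.ofReal ((frugalScale μ M n M + t * (1 / 4)) / frugalScale μ M n (M + n)) :=
        measure_ge_le_of_recursion (fun i => (hs_meas i).prodMk (hu_meas i)) hindep hlaw
          measurable_frugalStep hm0 hrec (measurable_of_countable _)
          (birthDeathScale.nonneg hp hq) (birthDeathScale.le_top hp hq)
          (integral_frugalScale_frugalStep_le μ hmedian fun x hx => by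
            linarith [hbelow x hx, measureReal_le_one (μ := μ) (s := Iic (M + n))])
          t hgL_pos
    _ ≤ ENNReal.ofReal ε := by
        refine ENNReal.ofReal_le_ofReal ?_
        rw [show frugalScale μ M n M = 0 from birthDeathScale.eq_zero_of_le le_rfl,
          div_le_iff₀ hgL_pos]
        have hεt : ε * (t / ε / 2) = t / 2 := by field_simp
        linarith [mul_le_mul_of_nonneg_left hgL hε0.le]

/-- If the Frugal-1U median process starts at the true median
(`m̃₀ = M` with `F(M) = 1/2`), then for every `t ≥ 1` and `ε ∈ (0,1)`,
`Pr[F(m̃_t) > 1/2 + 2√(δ·ln(t/ε))] ≤ ε`. -/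
theorem frugal1U_median_stability_right
    {Ω : Type*} [MeasureSpace Ω] [IsProbabilityMeasure (ℙ : Measure Ω)]
    (μ : Measure ℤ) [IsProbabilityMeasure μ]
    (δ : ℝ) (hδ0 : 0 < δ) (hδ1 : δ < 1)
    (hmass : ∀ x : ℤ, (μ {x}).toReal ≤ δ)
    (F : ℤ → ℝ) (hF : ∀ x : ℤ, F x = (μ {y : ℤ | y ≤ x}).toReal)
    (s : ℕ → Ω → ℤ) (u : ℕ → Ω → ℝ)
    (hs_meas : ∀ t, Measurable (s t)) (hu_meas : ∀ t, Measurable (u t))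
    (hlaw : ∀ t : ℕ, Measure.map (fun ω => (s t ω, u t ω)) ℙ
      = μ.prod (volume.restrict (Set.Icc (0:ℝ) 1)))
    (hindep : iIndepFun
      (fun t ω => (s t ω, u t ω)) ℙ)
    (m : ℕ → Ω → ℤ)
    (M : ℤ) (hmedian : F M = 1/2)
    (hm0 : ∀ ω, m 0 ω = M)
    (hrec : ∀ t ω, m (t+1) ω =
      if m t ω < s (t+1) ω ∧ (1:ℝ)/2 < u (t+1) ω then m t ω + 1
      else if s (t+1) ω < m t ω ∧ (1:ℝ)/2 < u (t+1) ω then m t ω - 1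
      else m t ω)
    (t : ℕ) (ht : 1 ≤ t) (ε : ℝ) (hε0 : 0 < ε) (hε1 : ε < 1) :
    ℙ {ω | 1/2 + 2 * Real.sqrt (δ * Real.log (t / ε)) < F (m t ω)}
      ≤ ENNReal.ofReal ε :=
  frugal1U_median_stability_right_general μ δ hδ0 hmass F hF s u hs_meas hu_meas hlaw hindep m M
    hmedian hm0 hrec t ht ε hε0 hε1
end

section
/- Let t ≥ 1, ε ∈ (0,1) with L = ln(t/ε) > 0, let 0 < δ < 1, set ω = 2·√(δ·L), and let T ≥ ω/δ. Then for every real j with 0 < j ≤ (4/ω²)·L, one has (ω·j + T)²/(4·j) ≥ T²·ω²/(16·L) ≥ ω⁴/(16·δ²·L) = L. In particular, exp(−(ω·j + T)²/(4·j)) ≤ ε/t for all such j. -/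
open Real

lemma sq_mul_sq_div_le_add_sq_div {a T j L : ℝ} (ha : 0 < a) (hT : 0 ≤ T) (hj : 0 < j)
    (hjL : j ≤ (4 / a ^ 2) * L) :
    T ^ 2 * a ^ 2 / (16 * L) ≤ (a * j + T) ^ 2 / (4 * j) :=
  calc T ^ 2 * a ^ 2 / (16 * L) = T ^ 2 / (4 * ((4 / a ^ 2) * L)) := by
        field_simp
        ring
    _ ≤ T ^ 2 / (4 * j) := by gcongr
    _ ≤ (a * j + T) ^ 2 / (4 * j) := by gcongr; nlinarith [mul_pos ha hj]

lemma pow_four_div_le_sq_mul_sq_div {δ w T L : ℝ} (hδ : 0 < δ) (hw : 0 ≤ w) (hL : 0 ≤ L)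
    (hT : w / δ ≤ T) :
    w ^ 4 / (16 * δ ^ 2 * L) ≤ T ^ 2 * w ^ 2 / (16 * L) :=
  calc w ^ 4 / (16 * δ ^ 2 * L) = (w / δ) ^ 2 * w ^ 2 / (16 * L) := by
        field_simp
    _ ≤ T ^ 2 * w ^ 2 / (16 * L) := by gcongr

lemma two_mul_sqrt_pow_four_div {δ L : ℝ} (hδ : 0 < δ) (hL : 0 < L) :
    (2 * √(δ * L)) ^ 4 / (16 * δ ^ 2 * L) = L := by
  rw [show (2 * √(δ * L)) ^ 4 = 16 * (√(δ * L) ^ 2) ^ 2 by ring,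
    sq_sqrt (mul_pos hδ hL).le]
  field_simp

lemma exp_neg_le_inv_of_log_le {x y : ℝ} (hx : 0 < x) (h : log x ≤ y) : exp (-y) ≤ x⁻¹ := by
  rw [← exp_log hx, ← exp_neg]
  exact exp_le_exp.mpr (neg_le_neg h)

theorem small_j_tail_exponent_bound_general
    (t ε : ℝ) (ht : 1 ≤ t) (hε0 : 0 < ε)
    (hL : 0 < Real.log (t / ε))
    (δ : ℝ) (hδ0 : 0 < δ)
    (w : ℝ) (hw : w = 2 * Real.sqrt (δ * Real.log (t / ε)))
    (T : ℝ) (hT : w / δ ≤ T) :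
    ∀ j : ℝ, 0 < j → j ≤ (4 / w ^ 2) * Real.log (t / ε) →
      T ^ 2 * w ^ 2 / (16 * Real.log (t / ε)) ≤ (w * j + T) ^ 2 / (4 * j) ∧
      w ^ 4 / (16 * δ ^ 2 * Real.log (t / ε))
        ≤ T ^ 2 * w ^ 2 / (16 * Real.log (t / ε)) ∧
      w ^ 4 / (16 * δ ^ 2 * Real.log (t / ε)) = Real.log (t / ε) ∧
      Real.exp (-((w * j + T) ^ 2 / (4 * j))) ≤ ε / t := by
  intro j hj hjL
  have hw0 : 0 < w := by rw [hw]; have := mul_pos hδ0 hL; positivity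
  have hT0 : 0 ≤ T := (div_pos hw0 hδ0).le.trans hT
  have h1 := sq_mul_sq_div_le_add_sq_div hw0 hT0 hj hjL
  have h2 := pow_four_div_le_sq_mul_sq_div hδ0 hw0.le hL.le hT
  have h3 : w ^ 4 / (16 * δ ^ 2 * log (t / ε)) = log (t / ε) :=
    hw ▸ two_mul_sqrt_pow_four_div hδ0 hL
  refine ⟨h1, h2, h3, ?_⟩
  rw [← inv_div t ε]
  exact exp_neg_le_inv_of_log_le (by positivity) (h3 ▸ h2.trans h1)

/-- With `L = ln(t/ε) > 0`, `0 < δ < 1`, `ω = 2·√(δ·L)` and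
`T ≥ ω/δ`, for every real `j` with `0 < j ≤ (4/ω²)·L` one has
`(ω·j + T)²/(4·j) ≥ T²·ω²/(16·L) ≥ ω⁴/(16·δ²·L) = L`, and consequently
`exp(−(ω·j + T)²/(4·j)) ≤ ε/t`.  (Here `w` plays the role of `ω`.) -/
theorem small_j_tail_exponent_bound
    (t ε : ℝ) (ht : 1 ≤ t) (hε0 : 0 < ε) (hε1 : ε < 1)
    (hL : 0 < Real.log (t / ε))
    (δ : ℝ) (hδ0 : 0 < δ) (hδ1 : δ < 1)
    (w : ℝ) (hw : w = 2 * Real.sqrt (δ * Real.log (t / ε)))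
    (T : ℝ) (hT : w / δ ≤ T) :
    ∀ j : ℝ, 0 < j → j ≤ (4 / w ^ 2) * Real.log (t / ε) →
      T ^ 2 * w ^ 2 / (16 * Real.log (t / ε)) ≤ (w * j + T) ^ 2 / (4 * j) ∧
      w ^ 4 / (16 * δ ^ 2 * Real.log (t / ε))
        ≤ T ^ 2 * w ^ 2 / (16 * Real.log (t / ε)) ∧
      w ^ 4 / (16 * δ ^ 2 * Real.log (t / ε)) = Real.log (t / ε) ∧
      Real.exp (-((w * j + T) ^ 2 / (4 * j))) ≤ ε / t :=
  small_j_tail_exponent_bound_general t ε ht hε0 hL δ hδ0 w hw T hT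
end
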